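/- Let B = [0,1]² and let s₁, s₂ be the antipode maps on ∂B associated to two nonparallel directions with real slopes m₁ and m₂ of the same sign (both positive or both negative) and m₁ ≠ m₂. Set (c₊, c₋) = ((0,1), (1,0)) if the slopes are positive and (c₊, c₋) = ((1,1), (0,0)) if the slopes are negative. Then for every b ∈ ∂B with b ∉ {c₊, c₋}, the two forward alternating sequences x₀ = b, x_{n+1} = s₁x_n for n even and x_{n+1} = s₂x_n for n odd, and y₀ = b, y_{n+1} = s₂y_n for n even and y_{n+1} = s₁y_n for n odd, satisfy: x_{n+1} ≠ x_n and y_{n+1} ≠ y_n for all n ≥ 0 (the extended trajectory through b is doubly infinite), both sequences converge, and one of them converges to c₊ while the other converges to c₋. -/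
import Mathlib


/-! Common definitions: boards, pieces, hyperplane arrangements, rank,
antipode maps, trajectories, augmentations, crossing points, denominators. -/

noncomputable section

/-- A point of the plane. -/
abbrev Pt : Type := ℝ × ℝ

/-- Dot product on `ℝ²`. -/
def dotp (u v : Pt) : ℝ := u.1 * v.1 + u.2 * v.2

/-- A board: a rational convex polygon `{z | ∀ j, a_j · z ≤ β_j}`, bounded, with
nonempty interior, each defining line meeting the board in at least two points (an edge). -/
structure Board where
  s : ℕ
  A : Fin s → Pt
  β : Fin s → ℝ
  A_rat : ∀ j, ∃ p q : ℚ, A j = ((p : ℝ), (q : ℝ))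
  β_rat : ∀ j, ∃ p : ℚ, β j = (p : ℝ)
  bounded : Bornology.IsBounded {z : Pt | ∀ j, dotp (A j) z ≤ β j}
  int_ne : (interior {z : Pt | ∀ j, dotp (A j) z ≤ β j}).Nonempty
  edges : ∀ j, ∃ u v : Pt, u ≠ v ∧ (∀ k, dotp (A k) u ≤ β k) ∧ (∀ k, dotp (A k) v ≤ β k) ∧
    dotp (A j) u = β j ∧ dotp (A j) v = β j

/-- The set of points of the board. -/
def Board.set (Bd : Board) : Set Pt := {z | ∀ j, dotp (Bd.A j) z ≤ Bd.β j}

/-- The corners of the board: its extreme points. -/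
def Board.corners (Bd : Board) : Set Pt := Set.extremePoints ℝ Bd.set

/-- A two-move rider: two nonparallel basic moves `(c r, d r)`, each with coprime entries. -/
structure Piece where
  c : Bool → ℤ
  d : Bool → ℤ
  coprime : ∀ r, Int.gcd (c r) (d r) = 1
  nonparallel : c false * d true - c true * d false ≠ 0

/-- The basic move vector of `P` of type `r`, as a vector in `ℝ²`. -/
def Piece.mv (P : Piece) (r : Bool) : Pt := ((P.c r : ℝ), (P.d r : ℝ))

/-- The normal vector `(d_r, -c_r)` of the attack equations of type `r`. -/
def Piece.anorm (P : Piece) (r : Bool) : Pt := ((P.d r : ℝ), -(P.c r : ℝ))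

/-- A configuration of `q` points in the plane; the configuration space is `ℝ^{2q}`. -/
abbrev Conf (q : ℕ) : Type := Fin q → Pt

/-- Dot product on the configuration space `ℝ^{2q}`. -/
def confDot {q : ℕ} (u w : Conf q) : ℝ := ∑ k, dotp (u k) (w k)

/-- The vector of `ℝ^{2q}` whose `i`-th planar component is `v` and all others `0`. -/
def unitVec {q : ℕ} (i : Fin q) (v : Pt) : Conf q := fun k => if k = i then v else 0

/-- The normal vector in `ℝ^{2q}` of the attack hyperplane `(w_i - w_j) · v = 0`. -/
def attackNormal {q : ℕ} (i j : Fin q) (v : Pt) : Conf q :=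
  fun k => if k = i then v else if k = j then -v else 0

/-- The hyperplane arrangement `H(z)` associated to a configuration `z`: each hyperplane
`{w | n · w = β}` is recorded as the pair `(n, β)`.  It consists of the attack hyperplanes
through `z` and the fixation hyperplanes through `z`. -/
def HArr (Bd : Board) (P : Piece) {q : ℕ} (z : Conf q) : Set (Conf q × ℝ) :=
  {h | (∃ i j : Fin q, ∃ r : Bool, i < j ∧ dotp (z i - z j) (P.anorm r) = 0 ∧
          h = (attackNormal i j (P.anorm r), 0)) ∨
       (∃ i : Fin q, ∃ e : Fin Bd.s, dotp (Bd.A e) (z i) = Bd.β e ∧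
          h = (unitVec i (Bd.A e), Bd.β e))}

/-- The rank of a configuration `z`: the dimension of the span of the normal vectors
of the hyperplanes of `H(z)`. -/
def confRank (Bd : Board) (P : Piece) {q : ℕ} (z : Conf q) : ℕ :=
  Module.finrank ℝ (Submodule.span ℝ (Prod.fst '' HArr Bd P z))

/-- A configuration has full rank when its rank is `2q`. -/
def FullRank (Bd : Board) (P : Piece) {q : ℕ} (z : Conf q) : Prop :=
  confRank Bd P z = 2 * q

/-- `z ∈ B^q`. -/
def InBoard (Bd : Board) {q : ℕ} (z : Conf q) : Prop := ∀ i, z i ∈ Bd.set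

/-- A vertex of the inside-out polytope `(B^q, A_P^q)`: a point of `B^q` that is the unique
common point of some subset of its associated hyperplane arrangement. -/
def IsVertex (Bd : Board) (P : Piece) {q : ℕ} (z : Conf q) : Prop :=
  InBoard Bd z ∧
    ∃ H' ⊆ HArr Bd P z, {w : Conf q | ∀ h ∈ H', confDot h.1 w = h.2} = {z}

/-- The line through `b` in direction `v` meets the interior of `R`. -/
def meetsInterior (R : Set Pt) (v : Pt) (b : Pt) : Prop := ∃ t : ℝ, b + t • v ∈ interior R

/-- `b'` is the antipode of `b` in direction `v`: if the line through `b` with direction `v`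
misses the interior of `R` then `b' = b`; otherwise `b'` is the second intersection point of
the line with the boundary of `R`. -/
def AntipRel (R : Set Pt) (v : Pt) (b b' : Pt) : Prop :=
  (¬ meetsInterior R v b → b' = b) ∧
  (meetsInterior R v b → b' ∈ frontier R ∧ b' ≠ b ∧ ∃ t : ℝ, b' = b + t • v)

/-- `s` is the antipode map of `R` in direction `v`. -/
def IsAntipodeMap (R : Set Pt) (v : Pt) (s : Pt → Pt) : Prop :=
  ∀ b ∈ frontier R, AntipRel R v b (s b)

/-- The move type used at step `i` of an alternating sequence whose step `0` uses type `st`. -/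
def altMove (st : Bool) (i : ℕ) : Bool := if i % 2 = 0 then st else !st

/-- A trajectory: a finite sequence `b 0, …, b (l-1)` of distinct boundary points of `R`,
each obtained from the previous by an antipode map, the move types alternating. -/
def IsTrajectory (R : Set Pt) (mv : Bool → Pt) (l : ℕ) (b : ℕ → Pt) (st : Bool) : Prop :=
  1 ≤ l ∧ (∀ i, i < l → b i ∈ frontier R) ∧
  (∀ i j, i < l → j < l → b i = b j → i = j) ∧
  (∀ i, i + 1 < l → AntipRel R (mv (altMove st i)) (b i) (b (i + 1)))

/-- A cyclical trajectory: additionally the first point is the antipode of the last,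
the move type continuing the alternation. -/
def IsCyclical (R : Set Pt) (mv : Bool → Pt) (l : ℕ) (b : ℕ → Pt) (st : Bool) : Prop :=
  IsTrajectory R mv l b st ∧ AntipRel R (mv (altMove st (l - 1))) (b (l - 1)) (b 0)

/-- The configuration `(b 1, …, b l) ∈ B^l` formed by the points of a trajectory. -/
def trajConf (l : ℕ) (b : ℕ → Pt) : Conf l := fun i => b i

/-- A corner trajectory: a trajectory containing a corner of the board. -/
def IsCornerTraj (Bd : Board) (P : Piece) (l : ℕ) (b : ℕ → Pt) (st : Bool) : Prop :=
  IsTrajectory Bd.set P.mv l b st ∧ ∃ i, i < l ∧ b i ∈ Bd.corners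

/-- A rigid cycle: a cyclical trajectory of full rank. -/
def IsRigidCycle (Bd : Board) (P : Piece) (l : ℕ) (b : ℕ → Pt) (st : Bool) : Prop :=
  IsCyclical Bd.set P.mv l b st ∧ confRank Bd P (trajConf l b) = 2 * l

/-- The trajectory can be extended backwards (the relevant antipode of its first point
is a different point). -/
def CanExtendBack (R : Set Pt) (mv : Bool → Pt) (b : ℕ → Pt) (st : Bool) : Prop :=
  meetsInterior R (mv (altMove st 1)) (b 0)

/-- The trajectory can be extended forwards (the relevant antipode of its last point
is a different point). -/
def CanExtendFwd (R : Set Pt) (mv : Bool → Pt) (l : ℕ) (b : ℕ → Pt) (st : Bool) : Prop :=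
  meetsInterior R (mv (altMove st (l - 1))) (b (l - 1))

/-- `a 0, …, a (L-1)` is the augmentation of the trajectory `b 0, …, b (l-1)`:
the trajectory with the antipode of its first point prepended whenever it differs from the
first point, and the antipode of its last point appended whenever it differs from the
last point. -/
def IsAugmentation (R : Set Pt) (mv : Bool → Pt) (l : ℕ) (b : ℕ → Pt) (st : Bool)
    (L : ℕ) (a : ℕ → Pt) : Prop :=
  ∃ off : ℕ,
    (∀ i, i < l → a (i + off) = b i) ∧
    (CanExtendBack R mv b st → off = 1 ∧ AntipRel R (mv (altMove st 1)) (b 0) (a 0)) ∧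
    (¬ CanExtendBack R mv b st → off = 0) ∧
    (CanExtendFwd R mv l b st →
      L = l + off + 1 ∧ AntipRel R (mv (altMove st (l - 1))) (b (l - 1)) (a (l + off))) ∧
    (¬ CanExtendFwd R mv l b st → L = l + off)

/-- `c` is a crossing point of the two sequences: an interior point of `R` lying on a
segment of each. -/
def CrossingOfSeqs (R : Set Pt) (La : ℕ) (a : ℕ → Pt) (Lb : ℕ) (bb : ℕ → Pt) (c : Pt) : Prop :=
  c ∈ interior R ∧ ∃ i j, i + 1 < La ∧ j + 1 < Lb ∧
    c ∈ segment ℝ (a i) (a (i + 1)) ∧ c ∈ segment ℝ (bb j) (bb (j + 1))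

/-- `c` is a self-crossing point of the sequence: an interior point of `R` lying on two
distinct segments of the sequence. -/
def SelfCrossingOfSeq (R : Set Pt) (La : ℕ) (a : ℕ → Pt) (c : Pt) : Prop :=
  c ∈ interior R ∧ ∃ i j, i ≠ j ∧ i + 1 < La ∧ j + 1 < La ∧
    c ∈ segment ℝ (a i) (a (i + 1)) ∧ c ∈ segment ℝ (a j) (a (j + 1))

/-- `x` is a rational number whose denominator (in lowest terms) divides `D`. -/
def DenDvd (x : ℝ) (D : ℕ) : Prop := ∃ p : ℚ, (p : ℝ) = x ∧ p.den ∣ D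

/-- Both coordinates of `z` are rational with denominators dividing `D`. -/
def PtDenDvd (z : Pt) (D : ℕ) : Prop := DenDvd z.1 D ∧ DenDvd z.2 D

/-- `D` is the denominator of the inside-out polytope `(B^q, A_P^q)`: the least common
multiple of the denominators of the coordinates of all of its vertices. -/
def IsIOPDenom (Bd : Board) (P : Piece) (q : ℕ) (D : ℕ) : Prop :=
  (∀ z : Conf q, IsVertex Bd P z → ∀ i, PtDenDvd (z i) D) ∧
  (∀ D' : ℕ, (∀ z : Conf q, IsVertex Bd P z → ∀ i, PtDenDvd (z i) D') → D ∣ D')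

/-- A finite family of finite sequences of points (with starting move types),
to be used as a family of trajectories. -/
structure TrajFamily where
  m : ℕ
  len : ℕ → ℕ
  pts : ℕ → ℕ → Pt
  st : ℕ → Bool

/-- Every member of the family is a trajectory. -/
def TrajFamily.Wf (F : TrajFamily) (R : Set Pt) (mv : Bool → Pt) : Prop :=
  ∀ k, k < F.m → IsTrajectory R mv (F.len k) (F.pts k) (F.st k)

/-- The members of the family partition the set `S`: their point sets are pairwise disjoint
with union `S`. -/
def TrajFamily.Partitions (F : TrajFamily) (S : Set Pt) : Prop :=
  {p | ∃ k, k < F.m ∧ ∃ i, i < F.len k ∧ F.pts k i = p} = S ∧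
  ∀ k k', k < F.m → k' < F.m → k ≠ k' →
    ∀ i i', i < F.len k → i' < F.len k' → F.pts k i ≠ F.pts k' i'

/-- The family is a partition into maximal trajectories: no point of one member is an
antipode of a point of a different member (no edge of the antipode graph joins two
distinct members). -/
def TrajFamily.Maximal (F : TrajFamily) (R : Set Pt) (mv : Bool → Pt) : Prop :=
  ∀ k k', k < F.m → k' < F.m → k ≠ k' →
    ∀ i i', i < F.len k → i' < F.len k' →
      ∀ r : Bool, ¬ AntipRel R (mv r) (F.pts k i) (F.pts k' i')

/-- The unit square `[0,1]²`. -/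
def unitSq : Set Pt := Set.Icc ((0, 0) : Pt) ((1, 1) : Pt)

end

noncomputable section

theorem interior_unitSq : interior unitSq = {z : Pt | 0 < z.1 ∧ z.1 < 1 ∧ 0 < z.2 ∧ z.2 < 1} := by
  rw [unitSq, ← Set.Icc_prod_Icc, interior_prod_eq]
  ext z; simp [Set.mem_prod]; tauto

theorem mem_unitSq (z : Pt) : z ∈ unitSq ↔ 0 ≤ z.1 ∧ z.1 ≤ 1 ∧ 0 ≤ z.2 ∧ z.2 ≤ 1 := by
  simp [unitSq, Set.mem_Icc, Prod.le_def]; tauto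

theorem frontier_unitSq (z : Pt) : z ∈ frontier unitSq ↔
    (0 ≤ z.1 ∧ z.1 ≤ 1 ∧ 0 ≤ z.2 ∧ z.2 ≤ 1) ∧ (z.1 = 0 ∨ z.1 = 1 ∨ z.2 = 0 ∨ z.2 = 1) := by
  rw [unitSq, isClosed_Icc.frontier_eq, Set.mem_diff, ← unitSq, mem_unitSq, interior_unitSq]
  simp only [Set.mem_setOf_eq]
  constructor
  · rintro ⟨⟨h1, h2, h3, h4⟩, h⟩
    refine ⟨⟨h1, h2, h3, h4⟩, ?_⟩
    by_contra hc; push_neg at hc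
    obtain ⟨a, b, c, d⟩ := hc
    exact h ⟨lt_of_le_of_ne h1 (Ne.symm a), lt_of_le_of_ne h2 b, lt_of_le_of_ne h3 (Ne.symm c), lt_of_le_of_ne h4 d⟩
  · rintro ⟨⟨h1, h2, h3, h4⟩, h⟩
    exact ⟨⟨h1, h2, h3, h4⟩, by rintro ⟨a, b, c, d⟩; rcases h with h|h|h|h <;> linarith⟩


namespace SqAux

def uu (b : Pt) : ℝ := b.1 - b.2
def LL (b : Pt) : Prop := (b.2 = 0 ∧ 0 ≤ b.1 ∧ b.1 < 1) ∨ (b.1 = 0 ∧ 0 ≤ b.2 ∧ b.2 < 1)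
def UU (b : Pt) : Prop := (b.2 = 1 ∧ 0 < b.1 ∧ b.1 ≤ 1) ∨ (b.1 = 1 ∧ 0 < b.2 ∧ b.2 ≤ 1)
def fwd (m : ℝ) (b : Pt) : Pt := (min (b.1 + (1 - b.2)/m) 1, min (b.2 + m*(1 - b.1)) 1)
def bwd (m : ℝ) (b : Pt) : Pt := (max (b.1 - b.2/m) 0, max (b.2 - m*b.1) 0)
def PP (u : ℝ) : Pt := (max u 0, max (-u) 0)

theorem LL.bounds {b : Pt} (h : LL b) : 0 ≤ b.1 ∧ b.1 < 1 ∧ 0 ≤ b.2 ∧ b.2 < 1 := by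
  rcases h with ⟨h1,h2,h3⟩|⟨h1,h2,h3⟩ <;>
    exact ⟨by linarith, by linarith, by linarith, by linarith⟩

theorem UU.bounds {b : Pt} (h : UU b) : 0 < b.1 ∧ b.1 ≤ 1 ∧ 0 < b.2 ∧ b.2 ≤ 1 := by
  rcases h with ⟨h1,h2,h3⟩|⟨h1,h2,h3⟩ <;>
    exact ⟨by linarith, by linarith, by linarith, by linarith⟩

theorem LL.frontier {b : Pt} (h : LL b) : b ∈ frontier unitSq := by
  rw [frontier_unitSq]
  obtain ⟨a,b1,c,d⟩ := h.bounds
  refine ⟨⟨a, by linarith, c, by linarith⟩, ?_⟩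
  rcases h with ⟨h1,_,_⟩|⟨h1,_,_⟩ <;> tauto

theorem UU.frontier {b : Pt} (h : UU b) : b ∈ frontier unitSq := by
  rw [frontier_unitSq]
  obtain ⟨a,b1,c,d⟩ := h.bounds
  refine ⟨⟨by linarith, b1, by linarith, d⟩, ?_⟩
  rcases h with ⟨h1,_,_⟩|⟨h1,_,_⟩ <;> tauto

theorem not_LL_UU {b : Pt} (h : LL b) (h' : UU b) : False := by
  obtain ⟨a,b1,c,d⟩ := h.bounds; obtain ⟨a',b1',c',d'⟩ := h'.bounds
  rcases h with ⟨h1,_,_⟩|⟨h1,_,_⟩ <;> linarith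

theorem LL_or_UU {b : Pt} (hb : b ∈ frontier unitSq) (h1 : b ≠ ((0:ℝ),(1:ℝ)))
    (h2 : b ≠ ((1:ℝ),(0:ℝ))) : LL b ∨ UU b := by
  rw [frontier_unitSq] at hb
  obtain ⟨⟨a1,a2,a3,a4⟩, hc⟩ := hb
  simp only [ne_eq, Prod.ext_iff, not_and] at h1 h2
  rcases hc with h|h|h|h
  · exact Or.inl (Or.inr ⟨h, a3, lt_of_le_of_ne a4 (h1 h)⟩)
  · exact Or.inr (Or.inr ⟨h, lt_of_le_of_ne a3 (fun hh => h2 h hh.symm), a4⟩)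
  · exact Or.inl (Or.inl ⟨h, a1, lt_of_le_of_ne a2 (fun hh => h2 hh h)⟩)
  · exact Or.inr (Or.inl ⟨h, lt_of_le_of_ne a1 (fun hh => h1 hh.symm h), a2⟩)

theorem LL.eq_PP {b : Pt} (h : LL b) : PP (uu b) = b := by
  rcases h with ⟨h1,h2,h3⟩|⟨h1,h2,h3⟩
  · have hu : uu b = b.1 := by simp [uu, h1]
    rw [Prod.ext_iff, hu]
    exact ⟨by simp [PP, max_eq_left h2],
      by simp [PP, h1, max_eq_right (neg_nonpos.mpr h2)]⟩
  · have hu : uu b = -b.2 := by simp [uu, h1]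
    rw [Prod.ext_iff, hu]
    exact ⟨by simp [PP, h1, max_eq_right (neg_nonpos.mpr h2)],
      by simp [PP, max_eq_left h2]⟩

theorem LL.uu_bounds {b : Pt} (h : LL b) : -1 < uu b ∧ uu b < 1 := by
  obtain ⟨a,b1,c,d⟩ := h.bounds; unfold uu; constructor <;> linarith

theorem fwd_eq_add {m : ℝ} (hm : 0 < m) (b : Pt) :
    fwd m b = b + (min (1 - b.1) ((1 - b.2)/m)) • ((1:ℝ), m) := by
  rw [Prod.ext_iff]
  constructor
  · show min (b.1 + (1 - b.2)/m) 1 = b.1 + (min (1 - b.1) ((1 - b.2)/m)) * 1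
    rcases le_total (1 - b.1) ((1 - b.2)/m) with h|h
    · rw [min_eq_left h, min_eq_right (by linarith)]; ring
    · rw [min_eq_right h, min_eq_left (by linarith)]; ring
  · show min (b.2 + m*(1 - b.1)) 1 = b.2 + (min (1 - b.1) ((1 - b.2)/m)) * m
    rcases le_total (1 - b.1) ((1 - b.2)/m) with h|h
    · have h' : (1 - b.1) * m ≤ 1 - b.2 := (le_div_iff₀ hm).mp h
      rw [min_eq_left (by linarith), min_eq_left h]; ring
    · have h' : 1 - b.2 ≤ (1 - b.1) * m := (div_le_iff₀ hm).mp h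
      rw [min_eq_right (by linarith), min_eq_right h, div_mul_cancel₀ _ (ne_of_gt hm)]; ring

theorem bwd_eq_add {m : ℝ} (hm : 0 < m) (b : Pt) :
    bwd m b = b + (max (-b.1) (-(b.2/m))) • ((1:ℝ), m) := by
  rw [Prod.ext_iff]
  constructor
  · show max (b.1 - b.2/m) 0 = b.1 + (max (-b.1) (-(b.2/m))) * 1
    rcases le_total (b.2/m) b.1 with h|h
    · rw [max_eq_left (by linarith), max_eq_right (by linarith)]; ring
    · rw [max_eq_right (by linarith), max_eq_left (by linarith)]; ring
  · show max (b.2 - m*b.1) 0 = b.2 + (max (-b.1) (-(b.2/m))) * m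
    rcases le_total (b.2/m) b.1 with h|h
    · have h' : b.2 ≤ b.1 * m := (div_le_iff₀ hm).mp h
      rw [max_eq_right (by linarith), max_eq_right (by linarith)]
      rw [neg_mul, div_mul_cancel₀ _ (ne_of_gt hm)]; ring
    · have h' : b.1 * m ≤ b.2 := (le_div_iff₀ hm).mp h
      rw [max_eq_left (by linarith), max_eq_left (by linarith)]; ring

theorem UU_fwd {m : ℝ} (hm : 0 < m) {b : Pt}
    (hb : 0 ≤ b.1 ∧ b.1 < 1 ∧ 0 ≤ b.2 ∧ b.2 < 1) : UU (fwd m b) := by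
  obtain ⟨h1, h2, h3, h4⟩ := hb
  have hd : 0 < (1 - b.2)/m := div_pos (by linarith) hm
  rcases le_total (b.2 + m*(1 - b.1)) 1 with h|h
  · refine Or.inr ⟨?_, ?_, ?_⟩
    · show min (b.1 + (1 - b.2)/m) 1 = 1
      have : (1 - b.1) * m ≤ 1 - b.2 := by nlinarith
      have : 1 - b.1 ≤ (1 - b.2)/m := (le_div_iff₀ hm).mpr this
      exact min_eq_right (by linarith)
    · show 0 < min (b.2 + m*(1 - b.1)) 1
      exact lt_min (by nlinarith) one_pos
    · exact min_le_right _ _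
  · refine Or.inl ⟨min_eq_right h, ?_, min_le_right _ _⟩
    show 0 < min (b.1 + (1 - b.2)/m) 1
    exact lt_min (by nlinarith) one_pos

theorem LL_bwd {m : ℝ} (hm : 0 < m) {b : Pt}
    (hb : 0 < b.1 ∧ b.1 ≤ 1 ∧ 0 < b.2 ∧ b.2 ≤ 1) : LL (bwd m b) := by
  obtain ⟨h1, h2, h3, h4⟩ := hb
  have hd : 0 < b.2/m := by positivity
  rcases le_total (b.2/m) b.1 with h|h
  · have hble : b.2 ≤ m * b.1 := by
      have := (div_le_iff₀ hm).mp h; nlinarith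
    refine Or.inl ⟨max_eq_right (by linarith), le_max_right _ _, ?_⟩
    show max (b.1 - b.2/m) 0 < 1
    exact max_lt (by linarith) one_pos
  · have hble : m * b.1 ≤ b.2 := by
      have := (le_div_iff₀ hm).mp h; nlinarith
    refine Or.inr ⟨max_eq_right (by linarith), le_max_right _ _, ?_⟩
    show max (b.2 - m*b.1) 0 < 1
    have : 0 < m * b.1 := by positivity
    exact max_lt (by linarith) one_pos

theorem meets_LL {m : ℝ} (hm : 0 < m) {b : Pt} (hb : LL b) :
    meetsInterior unitSq ((1:ℝ), m) b := by
  obtain ⟨h1, h2, h3, h4⟩ := hb.bounds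
  have hd : 0 < (1 - b.2)/m := div_pos (by linarith) hm
  refine ⟨(1/2) * min (1 - b.1) ((1 - b.2)/m), ?_⟩
  rw [interior_unitSq]
  have hmin : 0 < min (1 - b.1) ((1 - b.2)/m) := lt_min (by linarith) hd
  have ha : min (1 - b.1) ((1 - b.2)/m) ≤ 1 - b.1 := min_le_left _ _
  have hb2 : min (1 - b.1) ((1 - b.2)/m) * m ≤ 1 - b.2 := by
    have := min_le_right (1 - b.1) ((1 - b.2)/m)
    calc min (1 - b.1) ((1 - b.2)/m) * m ≤ ((1 - b.2)/m) * m := by nlinarith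
    _ = 1 - b.2 := by field_simp
  simp only [Set.mem_setOf_eq, Prod.fst_add, Prod.snd_add, Prod.smul_fst, Prod.smul_snd,
    smul_eq_mul]
  refine ⟨by nlinarith, by nlinarith, by nlinarith, by nlinarith⟩

theorem meets_UU {m : ℝ} (hm : 0 < m) {b : Pt} (hb : UU b) :
    meetsInterior unitSq ((1:ℝ), m) b := by
  obtain ⟨h1, h2, h3, h4⟩ := hb.bounds
  have hd : 0 < b.2/m := by positivity
  refine ⟨-((1/2) * min b.1 (b.2/m)), ?_⟩
  rw [interior_unitSq]
  have hmin : 0 < min b.1 (b.2/m) := lt_min h1 hd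
  have ha : min b.1 (b.2/m) ≤ b.1 := min_le_left _ _
  have hb2 : min b.1 (b.2/m) * m ≤ b.2 := by
    have := min_le_right b.1 (b.2/m)
    calc min b.1 (b.2/m) * m ≤ (b.2/m) * m := by nlinarith
    _ = b.2 := by field_simp
  simp only [Set.mem_setOf_eq, Prod.fst_add, Prod.snd_add, Prod.smul_fst, Prod.smul_snd,
    smul_eq_mul]
  refine ⟨by nlinarith, by nlinarith, by nlinarith, by nlinarith⟩

theorem uniq_LL {m : ℝ} (hm : 0 < m) {b b' : Pt} (hb : LL b) (hb' : b' ∈ frontier unitSq)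
    (hne : b' ≠ b) {t : ℝ} (ht : b' = b + t • ((1:ℝ), m)) : b' = fwd m b := by
  have e1 : b'.1 = b.1 + t := by rw [ht]; simp
  have e2 : b'.2 = b.2 + t * m := by
    rw [ht]; simp [mul_comm]
  rw [frontier_unitSq] at hb'
  obtain ⟨⟨a1, a2, a3, a4⟩, hc⟩ := hb'
  obtain ⟨g1, g2, g3, g4⟩ := hb.bounds
  have htne : t ≠ 0 := by
    rintro rfl
    exact hne (by rw [ht]; simp)
  have htpos : 0 < t := by
    rcases lt_or_gt_of_ne htne with hlt|h; swap; · exact h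
    exfalso
    rcases hb with ⟨h1,_,_⟩|⟨h1,_,_⟩
    · nlinarith
    · nlinarith
  have hb1' : 0 < b'.1 := by nlinarith
  have hb2' : 0 < b'.2 := by nlinarith
  rw [Prod.ext_iff]
  have hcc : b'.1 = 1 ∨ b'.2 = 1 := by
    rcases hc with h|h|h|h
    · exact absurd h (by linarith)
    · exact Or.inl h
    · exact absurd h (by linarith)
    · exact Or.inr h
  rcases hcc with h|h
  · have ht' : t = 1 - b.1 := by linarith
    have hle : b.2 + m * (1 - b.1) ≤ 1 := by nlinarith
    constructor
    · show b'.1 = min (b.1 + (1 - b.2)/m) 1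
      have : 1 - b.1 ≤ (1 - b.2)/m := (le_div_iff₀ hm).mpr (by nlinarith)
      rw [min_eq_right (by linarith), h]
    · show b'.2 = min (b.2 + m*(1 - b.1)) 1
      rw [min_eq_left hle, e2, ht']; ring
  · have ht' : t * m = 1 - b.2 := by linarith
    have ht'' : t = (1 - b.2)/m := by field_simp; linarith
    have hle : b.1 + (1 - b.2)/m ≤ 1 := by rw [← ht'']; linarith
    constructor
    · show b'.1 = min (b.1 + (1 - b.2)/m) 1
      rw [min_eq_left hle, e1, ht'']
    · show b'.2 = min (b.2 + m*(1 - b.1)) 1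
      have : 1 - b.2 ≤ m * (1 - b.1) := by
        have h5 : (1 - b.2)/m ≤ 1 - b.1 := by linarith
        have := (div_le_iff₀ hm).mp h5; nlinarith
      rw [min_eq_right (by linarith), h]

theorem uniq_UU {m : ℝ} (hm : 0 < m) {b b' : Pt} (hb : UU b) (hb' : b' ∈ frontier unitSq)
    (hne : b' ≠ b) {t : ℝ} (ht : b' = b + t • ((1:ℝ), m)) : b' = bwd m b := by
  have e1 : b'.1 = b.1 + t := by rw [ht]; simp
  have e2 : b'.2 = b.2 + t * m := by rw [ht]; simp [mul_comm]
  rw [frontier_unitSq] at hb'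
  obtain ⟨⟨a1, a2, a3, a4⟩, hc⟩ := hb'
  obtain ⟨g1, g2, g3, g4⟩ := hb.bounds
  have htne : t ≠ 0 := by
    rintro rfl
    exact hne (by rw [ht]; simp)
  have htneg : t < 0 := by
    rcases lt_or_gt_of_ne htne with h|h; · exact h
    exfalso
    rcases hb with ⟨h1,_,_⟩|⟨h1,_,_⟩
    · nlinarith
    · nlinarith
  have hb1' : b'.1 < 1 := by nlinarith
  have hb2' : b'.2 < 1 := by nlinarith
  rw [Prod.ext_iff]
  have hcc : b'.1 = 0 ∨ b'.2 = 0 := by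
    rcases hc with h|h|h|h
    · exact Or.inl h
    · exact absurd h (by linarith)
    · exact Or.inr h
    · exact absurd h (by linarith)
  rcases hcc with h|h
  · have ht' : t = -b.1 := by linarith
    have hge : 0 ≤ b.2 - m * b.1 := by nlinarith
    constructor
    · show b'.1 = max (b.1 - b.2/m) 0
      have : b.1 ≤ b.2/m := (le_div_iff₀ hm).mpr (by nlinarith)
      rw [max_eq_right (by linarith), h]
    · show b'.2 = max (b.2 - m*b.1) 0
      rw [max_eq_left hge, e2, ht']; ring
  · have ht' : t * m = -b.2 := by linarith
    have ht'' : t = -(b.2/m) := by field_simp; linarith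
    have hge : 0 ≤ b.1 - b.2/m := by
      have : b.1 + t ≥ 0 := by rw [← e1]; exact a1
      rw [ht''] at this; linarith
    constructor
    · show b'.1 = max (b.1 - b.2/m) 0
      rw [max_eq_left hge, e1, ht'']; ring
    · show b'.2 = max (b.2 - m*b.1) 0
      have : b.2 - m * b.1 ≤ 0 := by
        have h5 : b.2/m ≤ b.1 := by linarith
        have := (div_le_iff₀ hm).mp h5; nlinarith
      rw [max_eq_right this, h]

theorem s_eq_fwd {m : ℝ} {s : Pt → Pt} (hs : IsAntipodeMap unitSq ((1:ℝ), m) s)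
    (hm : 0 < m) {b : Pt} (hb : LL b) : s b = fwd m b := by
  obtain ⟨hfr, hne, t, ht⟩ := (hs b hb.frontier).2 (meets_LL hm hb)
  exact uniq_LL hm hb hfr hne ht

theorem s_eq_bwd {m : ℝ} {s : Pt → Pt} (hs : IsAntipodeMap unitSq ((1:ℝ), m) s)
    (hm : 0 < m) {b : Pt} (hb : UU b) : s b = bwd m b := by
  obtain ⟨hfr, hne, t, ht⟩ := (hs b hb.frontier).2 (meets_UU hm hb)
  exact uniq_UU hm hb hfr hne ht

theorem bwd_fwd {m : ℝ} (hm : 0 < m) {b : Pt} (hb : LL b) : bwd m (fwd m b) = b := by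
  have hU : UU (fwd m b) := UU_fwd hm hb.bounds
  have hne : b ≠ fwd m b := fun he => not_LL_UU hb (he ▸ hU)
  have hline : b = fwd m b + (-(min (1 - b.1) ((1 - b.2)/m))) • ((1:ℝ), m) := by
    rw [fwd_eq_add hm b, add_assoc, ← add_smul]
    simp
  exact (uniq_UU hm hU hb.frontier hne hline).symm

theorem uu_bwd_lt {m m' : ℝ} (hm' : 0 < m') (hmm : m' < m) {w : Pt}
    (hw : 0 < w.1 ∧ w.1 ≤ 1 ∧ 0 < w.2 ∧ w.2 ≤ 1) : uu (bwd m' w) < uu (bwd m w) := by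
  have hm : 0 < m := hm'.trans hmm
  obtain ⟨h1, h2, h3, h4⟩ := hw
  have hAA : w.1 - w.2/m' < w.1 - w.2/m := by
    have : w.2/m < w.2/m' := div_lt_div_of_pos_left h3 hm' hmm
    linarith
  have hBB : w.2 - m*w.1 < w.2 - m'*w.1 := by nlinarith
  show max (w.1 - w.2/m') 0 - max (w.2 - m'*w.1) 0 < max (w.1 - w.2/m) 0 - max (w.2 - m*w.1) 0
  rcases le_or_gt (w.1 - w.2/m) 0 with h|h
  · have hB : 0 ≤ w.2 - m*w.1 := by
      have := (le_div_iff₀ hm).mp (by linarith : w.1 ≤ w.2/m); nlinarith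
    rw [max_eq_right h, max_eq_right (by linarith), max_eq_left hB,
      max_eq_left (by linarith)]
    linarith
  · have hB : w.2 - m*w.1 < 0 := by
      have := (div_lt_iff₀ hm).mp (by linarith : w.2/m < w.1); nlinarith
    rw [max_eq_left h.le, max_eq_right hB.le]
    rcases le_or_gt (w.1 - w.2/m') 0 with h'|h'
    · rw [max_eq_right h']
      have := le_max_right (w.2 - m'*w.1) 0
      linarith
    · have hB' : w.2 - m'*w.1 < 0 := by
        have := (div_lt_iff₀ hm').mp (by linarith : w.2/m' < w.1); nlinarith
      rw [max_eq_left h'.le, max_eq_right hB'.le]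
      linarith

theorem cont_fwd (m : ℝ) : Continuous (fwd m) := by
  unfold fwd
  exact ((continuous_fst.add ((continuous_const.sub continuous_snd).div_const m)).min
    continuous_const).prodMk
    ((continuous_snd.add (continuous_const.mul (continuous_const.sub continuous_fst))).min
    continuous_const)

theorem cont_bwd (m : ℝ) : Continuous (bwd m) := by
  unfold bwd
  exact ((continuous_fst.sub (continuous_snd.div_const m)).max continuous_const).prodMk
    ((continuous_snd.sub (continuous_const.mul continuous_fst)).max continuous_const)

theorem cont_PP : Continuous PP := by
  unfold PP
  exact (continuous_id.max continuous_const).prodMk (continuous_neg.max continuous_const)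

theorem cont_uu : Continuous uu := continuous_fst.sub continuous_snd

theorem tendsto_even_odd {x : ℕ → Pt} {c : Pt}
    (he : Filter.Tendsto (fun n => x (2*n)) Filter.atTop (nhds c))
    (ho : Filter.Tendsto (fun n => x (2*n+1)) Filter.atTop (nhds c)) :
    Filter.Tendsto x Filter.atTop (nhds c) := by
  rw [Metric.tendsto_atTop] at he ho ⊢
  intro ε hε
  obtain ⟨N1, h1⟩ := he ε hε
  obtain ⟨N2, h2⟩ := ho ε hε
  refine ⟨2 * max N1 N2 + 2, fun n hn => ?_⟩
  rcases Nat.even_or_odd n with ⟨k, hk⟩|⟨k, hk⟩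
  · have : N1 ≤ k := by omega
    have := h1 k this
    rwa [show 2*k = n by omega] at this
  · have : N2 ≤ k := by omega
    have := h2 k this
    rwa [show 2*k+1 = n by omega] at this

theorem LL_PP {u : ℝ} (h1 : -1 < u) (h2 : u < 1) : LL (PP u) := by
  rcases le_total 0 u with h|h
  · exact Or.inl ⟨max_eq_right (by linarith), le_max_right _ _,
      show max u 0 < 1 from max_lt h2 one_pos⟩
  · exact Or.inr ⟨max_eq_right h, le_max_right _ _,
      show max (-u) 0 < 1 from max_lt (by linarith) one_pos⟩

theorem uu_PP (u : ℝ) : uu (PP u) = u := by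
  show max u 0 - max (-u) 0 = u
  rcases le_total 0 u with h|h
  · rw [max_eq_left h, max_eq_right (by linarith)]; ring
  · rw [max_eq_right h, max_eq_left (by linarith)]; ring

theorem PP_neg_one : PP (-1) = ((0:ℝ),(1:ℝ)) := by
  unfold PP; norm_num

theorem PP_one : PP 1 = ((1:ℝ),(0:ℝ)) := by
  unfold PP; norm_num

theorem fwd_cp {m : ℝ} (hm : 0 < m) : fwd m ((0:ℝ),(1:ℝ)) = ((0:ℝ),(1:ℝ)) := by
  unfold fwd
  rw [Prod.ext_iff]
  norm_num
  positivity

theorem fwd_cm {m : ℝ} (hm : 0 < m) : fwd m ((1:ℝ),(0:ℝ)) = ((1:ℝ),(0:ℝ)) := by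
  unfold fwd
  rw [Prod.ext_iff]
  norm_num
  positivity

section Seq
variable {ma mb : ℝ} {s s' : Pt → Pt} {x : ℕ → Pt}

theorem hstep_lemma (hma : 0 < ma) (hmb : 0 < mb)
    (hs : IsAntipodeMap unitSq ((1:ℝ), ma) s) (hs' : IsAntipodeMap unitSq ((1:ℝ), mb) s')
    (hx : ∀ n, x (n+1) = (if n % 2 = 0 then s else s') (x n)) :
    ∀ k, k % 2 = 0 → LL (x k) →
      LL (x (k+2)) ∧ x (k+1) = fwd ma (x k) ∧ x (k+2) = bwd mb (fwd ma (x k)) := by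
  intro k hk hLL
  have e1 : x (k+1) = fwd ma (x k) := by
    rw [hx k, if_pos hk]; exact s_eq_fwd hs hma hLL
  have hU : UU (x (k+1)) := by rw [e1]; exact UU_fwd hma hLL.bounds
  have e2 : x (k+2) = bwd mb (fwd ma (x k)) := by
    rw [hx (k+1), if_neg (by omega), s_eq_bwd hs' hmb hU, e1]
  exact ⟨by rw [e2]; exact LL_bwd hmb (UU_fwd hma hLL.bounds).bounds, e1, e2⟩

theorem seq_LL_lt (hma : 0 < ma) (hmb : 0 < mb) (hab : mb < ma)
    (hs : IsAntipodeMap unitSq ((1:ℝ), ma) s) (hs' : IsAntipodeMap unitSq ((1:ℝ), mb) s')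
    (hb : LL (x 0)) (hx : ∀ n, x (n+1) = (if n % 2 = 0 then s else s') (x n)) :
    (∀ n, x (n+1) ≠ x n) ∧ Filter.Tendsto x Filter.atTop (nhds ((0:ℝ),(1:ℝ))) := by
  have hstep := hstep_lemma hma hmb hs hs' hx
  have hLL : ∀ n, LL (x (2*n)) := by
    intro n
    induction n with
    | zero => simpa using hb
    | succ n ih =>
      have := (hstep (2*n) (by omega) ih).1
      rwa [show 2*n+2 = 2*(n+1) by ring] at this
  have e1 : ∀ n, x (2*n+1) = fwd ma (x (2*n)) := fun n => (hstep (2*n) (by omega) (hLL n)).2.1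
  have e2 : ∀ n, x (2*n+2) = bwd mb (fwd ma (x (2*n))) := fun n => (hstep (2*n) (by omega) (hLL n)).2.2
  set u : ℕ → ℝ := fun n => uu (x (2*n)) with hu_def
  have hdec : ∀ n, u (n+1) < u n := by
    intro n
    have h1 : u (n+1) = uu (bwd mb (fwd ma (x (2*n)))) := by
      show uu (x (2*(n+1))) = _
      rw [show 2*(n+1) = 2*n+2 by ring, e2 n]
    rw [h1]
    calc uu (bwd mb (fwd ma (x (2*n))))
        < uu (bwd ma (fwd ma (x (2*n)))) :=
          uu_bwd_lt hmb hab (UU_fwd hma (hLL n).bounds).bounds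
      _ = u n := by rw [bwd_fwd hma (hLL n)]
  have hbdd : BddBelow (Set.range u) := ⟨-1, by rintro _ ⟨n, rfl⟩; exact (hLL n).uu_bounds.1.le⟩
  have hanti : Antitone u := antitone_nat_of_succ_le (fun n => (hdec n).le)
  have hu : Filter.Tendsto u Filter.atTop (nhds (⨅ n, u n)) := tendsto_atTop_ciInf hanti hbdd
  set l := ⨅ n, u n with hl_def
  have hl1 : -1 ≤ l := le_ciInf fun n => (hLL n).uu_bounds.1.le
  have heven_aux : ∀ c : ℝ, Filter.Tendsto u Filter.atTop (nhds c) →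
      Filter.Tendsto (fun n => x (2*n)) Filter.atTop (nhds (PP c)) := by
    intro c hc
    have : (fun n => x (2*n)) = fun n => PP (u n) := funext fun n => ((hLL n).eq_PP).symm
    rw [this]
    exact (cont_PP.tendsto c).comp hc
  have hleq : l = -1 := by
    by_contra h
    have hl1' : -1 < l := lt_of_le_of_ne hl1 (Ne.symm h)
    have hl2 : l < 1 := lt_of_le_of_lt (ciInf_le hbdd 0) (hLL 0).uu_bounds.2
    have hz : LL (PP l) := LL_PP hl1' hl2
    have hxe := heven_aux l hu
    have h1 : Filter.Tendsto (fun n => u (n+1)) Filter.atTop (nhds l) :=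
      hu.comp (Filter.tendsto_add_atTop_nat 1)
    have h2 : Filter.Tendsto (fun n => u (n+1)) Filter.atTop
        (nhds (uu (bwd mb (fwd ma (PP l))))) := by
      have hfe : (fun n => u (n+1)) = fun n => uu (bwd mb (fwd ma (x (2*n)))) := by
        funext n
        show uu (x (2*(n+1))) = _
        rw [show 2*(n+1) = 2*n+2 by ring, e2 n]
      rw [hfe]
      exact ((cont_uu.comp ((cont_bwd mb).comp (cont_fwd ma))).tendsto (PP l)).comp hxe
    have heq2 : uu (bwd mb (fwd ma (PP l))) = l := tendsto_nhds_unique h2 h1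
    have hlt : uu (bwd mb (fwd ma (PP l))) < uu (PP l) := by
      calc uu (bwd mb (fwd ma (PP l)))
          < uu (bwd ma (fwd ma (PP l))) := uu_bwd_lt hmb hab (UU_fwd hma hz.bounds).bounds
        _ = uu (PP l) := by rw [bwd_fwd hma hz]
    rw [uu_PP, heq2] at hlt
    exact lt_irrefl _ hlt
  have heven : Filter.Tendsto (fun n => x (2*n)) Filter.atTop (nhds ((0:ℝ),(1:ℝ))) := by
    have := heven_aux l hu
    rwa [hleq, PP_neg_one] at this
  have hodd : Filter.Tendsto (fun n => x (2*n+1)) Filter.atTop (nhds ((0:ℝ),(1:ℝ))) := by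
    have hfe : (fun n => x (2*n+1)) = fun n => fwd ma (x (2*n)) := funext fun n => e1 n
    rw [hfe]
    have := ((cont_fwd ma).tendsto _).comp heven
    rwa [fwd_cp hma] at this
  refine ⟨?_, tendsto_even_odd heven hodd⟩
  intro n
  rcases Nat.even_or_odd n with ⟨k, hk⟩|⟨k, hk⟩
  · rw [show n = 2*k by omega]
    intro heq
    have hU : UU (x (2*k+1)) := by rw [e1 k]; exact UU_fwd hma (hLL k).bounds
    exact not_LL_UU (hLL k) (heq ▸ hU)
  · rw [show n = 2*k+1 by omega]
    intro heq
    have hU : UU (x (2*k+1)) := by rw [e1 k]; exact UU_fwd hma (hLL k).bounds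
    have hL : LL (x (2*k+1+1)) := by
      have := hLL (k+1)
      rwa [show 2*(k+1) = 2*k+1+1 by ring] at this
    exact not_LL_UU (heq ▸ hL) hU

theorem seq_LL_gt (hma : 0 < ma) (hmb : 0 < mb) (hab : ma < mb)
    (hs : IsAntipodeMap unitSq ((1:ℝ), ma) s) (hs' : IsAntipodeMap unitSq ((1:ℝ), mb) s')
    (hb : LL (x 0)) (hx : ∀ n, x (n+1) = (if n % 2 = 0 then s else s') (x n)) :
    (∀ n, x (n+1) ≠ x n) ∧ Filter.Tendsto x Filter.atTop (nhds ((1:ℝ),(0:ℝ))) := by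
  have hstep := hstep_lemma hma hmb hs hs' hx
  have hLL : ∀ n, LL (x (2*n)) := by
    intro n
    induction n with
    | zero => simpa using hb
    | succ n ih =>
      have := (hstep (2*n) (by omega) ih).1
      rwa [show 2*n+2 = 2*(n+1) by ring] at this
  have e1 : ∀ n, x (2*n+1) = fwd ma (x (2*n)) := fun n => (hstep (2*n) (by omega) (hLL n)).2.1
  have e2 : ∀ n, x (2*n+2) = bwd mb (fwd ma (x (2*n))) := fun n => (hstep (2*n) (by omega) (hLL n)).2.2
  set u : ℕ → ℝ := fun n => uu (x (2*n)) with hu_def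
  have hinc : ∀ n, u n < u (n+1) := by
    intro n
    have h1 : u (n+1) = uu (bwd mb (fwd ma (x (2*n)))) := by
      show uu (x (2*(n+1))) = _
      rw [show 2*(n+1) = 2*n+2 by ring, e2 n]
    rw [h1]
    calc u n = uu (bwd ma (fwd ma (x (2*n)))) := by rw [bwd_fwd hma (hLL n)]
      _ < uu (bwd mb (fwd ma (x (2*n)))) :=
          uu_bwd_lt hma hab (UU_fwd hma (hLL n).bounds).bounds
  have hbdd : BddAbove (Set.range u) := ⟨1, by rintro _ ⟨n, rfl⟩; exact (hLL n).uu_bounds.2.le⟩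
  have hmono : Monotone u := monotone_nat_of_le_succ (fun n => (hinc n).le)
  have hu : Filter.Tendsto u Filter.atTop (nhds (⨆ n, u n)) := tendsto_atTop_ciSup hmono hbdd
  set l := ⨆ n, u n with hl_def
  have hl1 : l ≤ 1 := ciSup_le fun n => (hLL n).uu_bounds.2.le
  have heven_aux : ∀ c : ℝ, Filter.Tendsto u Filter.atTop (nhds c) →
      Filter.Tendsto (fun n => x (2*n)) Filter.atTop (nhds (PP c)) := by
    intro c hc
    have : (fun n => x (2*n)) = fun n => PP (u n) := funext fun n => ((hLL n).eq_PP).symm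
    rw [this]
    exact (cont_PP.tendsto c).comp hc
  have hleq : l = 1 := by
    by_contra h
    have hl2 : l < 1 := lt_of_le_of_ne hl1 h
    have hl1' : -1 < l := lt_of_lt_of_le (hLL 0).uu_bounds.1 (le_ciSup hbdd 0)
    have hz : LL (PP l) := LL_PP hl1' hl2
    have hxe := heven_aux l hu
    have h1 : Filter.Tendsto (fun n => u (n+1)) Filter.atTop (nhds l) :=
      hu.comp (Filter.tendsto_add_atTop_nat 1)
    have h2 : Filter.Tendsto (fun n => u (n+1)) Filter.atTop
        (nhds (uu (bwd mb (fwd ma (PP l))))) := by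
      have hfe : (fun n => u (n+1)) = fun n => uu (bwd mb (fwd ma (x (2*n)))) := by
        funext n
        show uu (x (2*(n+1))) = _
        rw [show 2*(n+1) = 2*n+2 by ring, e2 n]
      rw [hfe]
      exact ((cont_uu.comp ((cont_bwd mb).comp (cont_fwd ma))).tendsto (PP l)).comp hxe
    have heq2 : uu (bwd mb (fwd ma (PP l))) = l := tendsto_nhds_unique h2 h1
    have hlt : uu (PP l) < uu (bwd mb (fwd ma (PP l))) := by
      calc uu (PP l) = uu (bwd ma (fwd ma (PP l))) := by rw [bwd_fwd hma hz]
        _ < uu (bwd mb (fwd ma (PP l))) := uu_bwd_lt hma hab (UU_fwd hma hz.bounds).bounds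
    rw [uu_PP, heq2] at hlt
    exact lt_irrefl _ hlt
  have heven : Filter.Tendsto (fun n => x (2*n)) Filter.atTop (nhds ((1:ℝ),(0:ℝ))) := by
    have := heven_aux l hu
    rwa [hleq, PP_one] at this
  have hodd : Filter.Tendsto (fun n => x (2*n+1)) Filter.atTop (nhds ((1:ℝ),(0:ℝ))) := by
    have hfe : (fun n => x (2*n+1)) = fun n => fwd ma (x (2*n)) := funext fun n => e1 n
    rw [hfe]
    have := ((cont_fwd ma).tendsto _).comp heven
    rwa [fwd_cm hma] at this
  refine ⟨?_, tendsto_even_odd heven hodd⟩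
  intro n
  rcases Nat.even_or_odd n with ⟨k, hk⟩|⟨k, hk⟩
  · rw [show n = 2*k by omega]
    intro heq
    have hU : UU (x (2*k+1)) := by rw [e1 k]; exact UU_fwd hma (hLL k).bounds
    exact not_LL_UU (hLL k) (heq ▸ hU)
  · rw [show n = 2*k+1 by omega]
    intro heq
    have hU : UU (x (2*k+1)) := by rw [e1 k]; exact UU_fwd hma (hLL k).bounds
    have hL : LL (x (2*k+1+1)) := by
      have := hLL (k+1)
      rwa [show 2*(k+1) = 2*k+1+1 by ring] at this
    exact not_LL_UU (heq ▸ hL) hU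

theorem seq_UU_shift (hma : 0 < ma)
    (hs : IsAntipodeMap unitSq ((1:ℝ), ma) s)
    (hb : UU (x 0)) (hx : ∀ n, x (n+1) = (if n % 2 = 0 then s else s') (x n)) :
    LL (x 1) ∧ (∀ n, (fun k => x (k+1)) (n+1) = (if n % 2 = 0 then s' else s) ((fun k => x (k+1)) n)) := by
  have e0 : x 1 = bwd ma (x 0) := by
    rw [hx 0, if_pos rfl]; exact s_eq_bwd hs hma hb
  refine ⟨by rw [e0]; exact LL_bwd hma hb.bounds, ?_⟩
  intro n
  show x (n+2) = _
  rw [hx (n+1)]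
  rcases Nat.even_or_odd n with ⟨k,hk⟩|⟨k,hk⟩
  · rw [if_neg (by omega), if_pos (by omega)]
  · rw [if_pos (by omega), if_neg (by omega)]

theorem seq_UU_gt (hma : 0 < ma) (hmb : 0 < mb) (hab : ma < mb)
    (hs : IsAntipodeMap unitSq ((1:ℝ), ma) s) (hs' : IsAntipodeMap unitSq ((1:ℝ), mb) s')
    (hb : UU (x 0)) (hx : ∀ n, x (n+1) = (if n % 2 = 0 then s else s') (x n)) :
    (∀ n, x (n+1) ≠ x n) ∧ Filter.Tendsto x Filter.atTop (nhds ((0:ℝ),(1:ℝ))) := by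
  obtain ⟨hL, hx'⟩ := seq_UU_shift hma hs hb hx
  obtain ⟨hne', htd⟩ := seq_LL_lt (x := fun k => x (k+1)) hmb hma hab hs' hs hL hx'
  constructor
  · intro n
    cases n with
    | zero => exact fun h => not_LL_UU (h ▸ hL) hb
    | succ k => exact hne' k
  · exact (Filter.tendsto_add_atTop_iff_nat 1).mp htd

theorem seq_UU_lt (hma : 0 < ma) (hmb : 0 < mb) (hab : mb < ma)
    (hs : IsAntipodeMap unitSq ((1:ℝ), ma) s) (hs' : IsAntipodeMap unitSq ((1:ℝ), mb) s')
    (hb : UU (x 0)) (hx : ∀ n, x (n+1) = (if n % 2 = 0 then s else s') (x n)) :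
    (∀ n, x (n+1) ≠ x n) ∧ Filter.Tendsto x Filter.atTop (nhds ((1:ℝ),(0:ℝ))) := by
  obtain ⟨hL, hx'⟩ := seq_UU_shift hma hs hb hx
  obtain ⟨hne', htd⟩ := seq_LL_gt (x := fun k => x (k+1)) hmb hma hab hs' hs hL hx'
  constructor
  · intro n
    cases n with
    | zero => exact fun h => not_LL_UU (h ▸ hL) hb
    | succ k => exact hne' k
  · exact (Filter.tendsto_add_atTop_iff_nat 1).mp htd
end Seq

theorem pos_case (m₁ m₂ : ℝ) (h1 : 0 < m₁) (h2 : 0 < m₂) (hne : m₁ ≠ m₂)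
    (s₁ s₂ : Pt → Pt)
    (hs₁ : IsAntipodeMap unitSq ((1 : ℝ), m₁) s₁)
    (hs₂ : IsAntipodeMap unitSq ((1 : ℝ), m₂) s₂)
    (b : Pt) (hb : b ∈ frontier unitSq) (hbp : b ≠ ((0:ℝ),(1:ℝ))) (hbm : b ≠ ((1:ℝ),(0:ℝ)))
    (x y : ℕ → Pt) (hx0 : x 0 = b) (hy0 : y 0 = b)
    (hx : ∀ n, x (n + 1) = (if n % 2 = 0 then s₁ else s₂) (x n))
    (hy : ∀ n, y (n + 1) = (if n % 2 = 0 then s₂ else s₁) (y n)) :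
    (∀ n, x (n + 1) ≠ x n) ∧ (∀ n, y (n + 1) ≠ y n) ∧
    ((Filter.Tendsto x Filter.atTop (nhds ((0:ℝ),(1:ℝ))) ∧
        Filter.Tendsto y Filter.atTop (nhds ((1:ℝ),(0:ℝ)))) ∨
     (Filter.Tendsto x Filter.atTop (nhds ((1:ℝ),(0:ℝ))) ∧
        Filter.Tendsto y Filter.atTop (nhds ((0:ℝ),(1:ℝ))))) := by
  rcases LL_or_UU hb hbp hbm with hL|hU
  · have hLx : LL (x 0) := by rw [hx0]; exact hL
    have hLy : LL (y 0) := by rw [hy0]; exact hL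
    rcases lt_or_gt_of_ne hne with h|h
    · obtain ⟨hxne, hxt⟩ := seq_LL_gt h1 h2 h hs₁ hs₂ hLx hx
      obtain ⟨hyne, hyt⟩ := seq_LL_lt h2 h1 h hs₂ hs₁ hLy hy
      exact ⟨hxne, hyne, Or.inr ⟨hxt, hyt⟩⟩
    · obtain ⟨hxne, hxt⟩ := seq_LL_lt h1 h2 h hs₁ hs₂ hLx hx
      obtain ⟨hyne, hyt⟩ := seq_LL_gt h2 h1 h hs₂ hs₁ hLy hy
      exact ⟨hxne, hyne, Or.inl ⟨hxt, hyt⟩⟩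
  · have hUx : UU (x 0) := by rw [hx0]; exact hU
    have hUy : UU (y 0) := by rw [hy0]; exact hU
    rcases lt_or_gt_of_ne hne with h|h
    · obtain ⟨hxne, hxt⟩ := seq_UU_gt h1 h2 h hs₁ hs₂ hUx hx
      obtain ⟨hyne, hyt⟩ := seq_UU_lt h2 h1 h hs₂ hs₁ hUy hy
      exact ⟨hxne, hyne, Or.inl ⟨hxt, hyt⟩⟩
    · obtain ⟨hxne, hxt⟩ := seq_UU_lt h1 h2 h hs₁ hs₂ hUx hx
      obtain ⟨hyne, hyt⟩ := seq_UU_gt h2 h1 h hs₂ hs₁ hUy hy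
      exact ⟨hxne, hyne, Or.inr ⟨hxt, hyt⟩⟩

theorem conj_antipode (g : Pt → Pt) (hg : ∀ z, g (g z) = z)
    (hint : ∀ z, g z ∈ interior unitSq ↔ z ∈ interior unitSq)
    (hfr : ∀ z, g z ∈ frontier unitSq ↔ z ∈ frontier unitSq)
    (v v' : Pt) (c c' : ℝ)
    (hl1 : ∀ z t, g (z + t • v) = g z + (c*t) • v')
    (hl2 : ∀ z t, g (z + t • v') = g z + (c'*t) • v)
    {s : Pt → Pt} (hs : IsAntipodeMap unitSq v s) :
    IsAntipodeMap unitSq v' (fun b => g (s (g b))) := by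
  intro b hb
  have hgb : g b ∈ frontier unitSq := (hfr b).mpr hb
  have hmi : meetsInterior unitSq v' b ↔ meetsInterior unitSq v (g b) := by
    constructor
    · rintro ⟨t, ht⟩
      refine ⟨c'*t, ?_⟩
      have h := (hint (b + t • v')).mpr ht
      rwa [hl2 b t] at h
    · rintro ⟨t, ht⟩
      refine ⟨c*t, ?_⟩
      have h := (hint (g b + t • v)).mpr ht
      rwa [hl1 (g b) t, hg b] at h
  constructor
  · intro hn
    have hnn : ¬ meetsInterior unitSq v (g b) := fun hh => hn (hmi.mpr hh)
    have := (hs (g b) hgb).1 hnn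
    show g (s (g b)) = b
    rw [this, hg]
  · intro hm
    obtain ⟨hf, hne, t, ht⟩ := (hs (g b) hgb).2 (hmi.mp hm)
    refine ⟨(hfr _).mpr hf, ?_, ⟨c*t, ?_⟩⟩
    · intro heq
      apply hne
      have : g (g (s (g b))) = g b := congrArg g heq
      rwa [hg] at this
    · show g (s (g b)) = b + (c*t) • v'
      rw [ht, hl1, hg]
end SqAux
end


noncomputable section

/-- For antipode maps of the square in two nonparallel directions with slopes of the same
sign, every extended trajectory through a point other than the two distinguished opposite
corners is doubly infinite, and its two forward alternating halves converge to the two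
distinguished corners (one to each). -/
theorem same_sign_slopes_converge (m₁ m₂ : ℝ) (hne : m₁ ≠ m₂)
    (cp cm : Pt)
    (hcase : (0 < m₁ ∧ 0 < m₂ ∧ cp = ((0 : ℝ), (1 : ℝ)) ∧ cm = ((1 : ℝ), (0 : ℝ))) ∨
             (m₁ < 0 ∧ m₂ < 0 ∧ cp = ((1 : ℝ), (1 : ℝ)) ∧ cm = ((0 : ℝ), (0 : ℝ))))
    (s₁ s₂ : Pt → Pt)
    (hs₁ : IsAntipodeMap unitSq ((1 : ℝ), m₁) s₁)
    (hs₂ : IsAntipodeMap unitSq ((1 : ℝ), m₂) s₂)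
    (b : Pt) (hb : b ∈ frontier unitSq) (hbp : b ≠ cp) (hbm : b ≠ cm)
    (x y : ℕ → Pt) (hx0 : x 0 = b) (hy0 : y 0 = b)
    (hx : ∀ n, x (n + 1) = (if n % 2 = 0 then s₁ else s₂) (x n))
    (hy : ∀ n, y (n + 1) = (if n % 2 = 0 then s₂ else s₁) (y n)) :
    (∀ n, x (n + 1) ≠ x n) ∧ (∀ n, y (n + 1) ≠ y n) ∧
    ((Filter.Tendsto x Filter.atTop (nhds cp) ∧ Filter.Tendsto y Filter.atTop (nhds cm)) ∨
     (Filter.Tendsto x Filter.atTop (nhds cm) ∧ Filter.Tendsto y Filter.atTop (nhds cp))) := by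
  rcases hcase with ⟨h1, h2, hcp, hcm⟩|⟨h1, h2, hcp, hcm⟩
  · subst hcp; subst hcm
    exact SqAux.pos_case m₁ m₂ h1 h2 hne s₁ s₂ hs₁ hs₂ b hb hbp hbm x y hx0 hy0 hx hy
  · subst hcp; subst hcm
    set g : Pt → Pt := fun z => ((1:ℝ) - z.1, z.2) with hgdef
    have hg : ∀ z, g (g z) = z := by
      intro z; simp only [hgdef, Prod.ext_iff]; constructor
      · show 1 - (1 - z.1) = z.1; ring
      · trivial
    have cont_g : Continuous g := (continuous_const.sub continuous_fst).prodMk continuous_snd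
    have hint : ∀ z, g z ∈ interior unitSq ↔ z ∈ interior unitSq := by
      intro z
      rw [interior_unitSq]
      simp only [Set.mem_setOf_eq, hgdef]
      constructor
      · rintro ⟨a, b2, c, d⟩; exact ⟨by linarith, by linarith, c, d⟩
      · rintro ⟨a, b2, c, d⟩; exact ⟨by linarith, by linarith, c, d⟩
    have hfr : ∀ z, g z ∈ frontier unitSq ↔ z ∈ frontier unitSq := by
      intro z
      rw [frontier_unitSq, frontier_unitSq]
      simp only [hgdef]
      constructor
      · rintro ⟨⟨a, b2, c, d⟩, h⟩
        refine ⟨⟨by linarith, by linarith, c, d⟩, ?_⟩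
        rcases h with h|h|h|h
        · exact Or.inr (Or.inl (by linarith))
        · exact Or.inl (by linarith)
        · exact Or.inr (Or.inr (Or.inl h))
        · exact Or.inr (Or.inr (Or.inr h))
      · rintro ⟨⟨a, b2, c, d⟩, h⟩
        refine ⟨⟨by linarith, by linarith, c, d⟩, ?_⟩
        rcases h with h|h|h|h
        · exact Or.inr (Or.inl (by linarith))
        · exact Or.inl (by linarith)
        · exact Or.inr (Or.inr (Or.inl h))
        · exact Or.inr (Or.inr (Or.inr h))
    have hl : ∀ m : ℝ, (∀ (z : Pt) (t : ℝ), g (z + t • ((1:ℝ), m)) = g z + ((-1)*t) • ((1:ℝ), -m)) := by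
      intro m z t
      simp only [hgdef, Prod.ext_iff, Prod.fst_add, Prod.snd_add, Prod.smul_fst, Prod.smul_snd,
        smul_eq_mul]
      constructor <;> ring
    have hl' : ∀ m : ℝ, (∀ (z : Pt) (t : ℝ), g (z + t • ((1:ℝ), -m)) = g z + ((-1)*t) • ((1:ℝ), m)) := by
      intro m z t
      have := hl (-m) z t
      rwa [neg_neg] at this
    set t₁ : Pt → Pt := fun b => g (s₁ (g b)) with ht₁def
    set t₂ : Pt → Pt := fun b => g (s₂ (g b)) with ht₂def
    have hts₁ : IsAntipodeMap unitSq ((1:ℝ), -m₁) t₁ :=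
      SqAux.conj_antipode g hg hint hfr ((1:ℝ), m₁) ((1:ℝ), -m₁) (-1) (-1) (hl m₁) (hl' m₁) hs₁
    have hts₂ : IsAntipodeMap unitSq ((1:ℝ), -m₂) t₂ :=
      SqAux.conj_antipode g hg hint hfr ((1:ℝ), m₂) ((1:ℝ), -m₂) (-1) (-1) (hl m₂) (hl' m₂) hs₂
    set xt : ℕ → Pt := fun n => g (x n) with hxtdef
    set yt : ℕ → Pt := fun n => g (y n) with hytdef
    have hxt : ∀ n, xt (n+1) = (if n % 2 = 0 then t₁ else t₂) (xt n) := by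
      intro n
      by_cases hn : n % 2 = 0
      · simp only [if_pos hn, hxtdef, ht₁def, hx n, hg]
      · simp only [if_neg hn, hxtdef, ht₂def, hx n, hg]
    have hyt : ∀ n, yt (n+1) = (if n % 2 = 0 then t₂ else t₁) (yt n) := by
      intro n
      by_cases hn : n % 2 = 0
      · simp only [if_pos hn, hytdef, ht₂def, hy n, hg]
      · simp only [if_neg hn, hytdef, ht₁def, hy n, hg]
    have hgcp : g ((0:ℝ),(1:ℝ)) = ((1:ℝ),(1:ℝ)) := by simp [hgdef]
    have hgcm : g ((1:ℝ),(0:ℝ)) = ((0:ℝ),(0:ℝ)) := by simp [hgdef]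
    have hbpt : g b ≠ ((0:ℝ),(1:ℝ)) := by
      intro h
      apply hbp
      have := congrArg g h
      rwa [hg, hgcp] at this
    have hbmt : g b ≠ ((1:ℝ),(0:ℝ)) := by
      intro h
      apply hbm
      have := congrArg g h
      rwa [hg, hgcm] at this
    obtain ⟨hxne, hyne, hdisj⟩ := SqAux.pos_case (-m₁) (-m₂) (by linarith) (by linarith)
      (fun h => hne (by linarith)) t₁ t₂ hts₁ hts₂ (g b) ((hfr b).mpr hb) hbpt hbmt
      xt yt (by rw [hxtdef]; exact congrArg g hx0) (by rw [hytdef]; exact congrArg g hy0) hxt hyt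
    have htransfer : ∀ (z : ℕ → Pt) (c c' : Pt), g c = c' →
        Filter.Tendsto (fun n => g (z n)) Filter.atTop (nhds c) →
        Filter.Tendsto z Filter.atTop (nhds c') := by
      intro z c c' hc hz
      have hze : z = fun n => g (g (z n)) := funext fun n => (hg (z n)).symm
      rw [hze, ← hc]
      exact (cont_g.tendsto c).comp hz
    refine ⟨fun n h => hxne n (congrArg g h), fun n h => hyne n (congrArg g h), ?_⟩
    rcases hdisj with ⟨hx1, hy1⟩|⟨hx1, hy1⟩
    · exact Or.inl ⟨htransfer x _ _ hgcp hx1, htransfer y _ _ hgcm hy1⟩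
    · exact Or.inr ⟨htransfer x _ _ hgcm hx1, htransfer y _ _ hgcp hy1⟩

end
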